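/- arXiv:1204.2930 — 4 statements merged into one kernel-verified Lean document; each statement's English description precedes it below -/
import Mathlib

section
/- Let A, B, C be the vertices of a nondegenerate triangle in the Euclidean plane whose side lengths come from a circle-pattern configuration: there exist positive reals r_A, r_B, r_C and weights Φ_AB, Φ_BC, Φ_CA ∈ [0, π/2] such that |AB|² = r_A² + r_B² + 2 r_A r_B cos Φ_AB, |BC|² = r_B² + r_C² + 2 r_B r_C cos Φ_BC, and |CA|² = r_C² + r_A² + 2 r_C r_A cos Φ_CA. Let O be a point lying strictly inside the triangle ABC that satisfies |OA|² − r_A² = |OB|² − r_B² = |OC|² − r_C² (i.e., O is the radical center of the three circles of radii r_A, r_B, r_C centered at A, B, C), and let H be the foot of the perpendicular from O to the line BC; assume H lies strictly between B and C. Then |OH| < √3 · |BC|. -/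
open Real

open scoped RealInnerProductSpace

set_option maxHeartbeats 1000000

/-- Key lemma for the bound on the discrete dual-Laplacian weights: in a triangle `ABC`
whose side lengths come from a circle-pattern configuration with weights in `[0, π/2]`,
if the radical center `O` of the three circles lies strictly inside the triangle and the
foot `H` of the perpendicular from `O` to the line `BC` lies strictly between `B` and `C`,
then `|OH| < √3 |BC|`. -/
theorem dist_foot_lt_sqrt_three_mul
    (A B C O H : EuclideanSpace ℝ (Fin 2))
    (rA rB rC ΦAB ΦBC ΦCA : ℝ)
    (hABC : AffineIndependent ℝ ![A, B, C])
    (hrA : 0 < rA) (hrB : 0 < rB) (hrC : 0 < rC)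
    (hΦAB : ΦAB ∈ Set.Icc 0 (π / 2)) (hΦBC : ΦBC ∈ Set.Icc 0 (π / 2))
    (hΦCA : ΦCA ∈ Set.Icc 0 (π / 2))
    (hAB : dist A B ^ 2 = rA ^ 2 + rB ^ 2 + 2 * rA * rB * Real.cos ΦAB)
    (hBC : dist B C ^ 2 = rB ^ 2 + rC ^ 2 + 2 * rB * rC * Real.cos ΦBC)
    (hCA : dist C A ^ 2 = rC ^ 2 + rA ^ 2 + 2 * rC * rA * Real.cos ΦCA)
    (hO : O ∈ interior (convexHull ℝ ({A, B, C} : Set (EuclideanSpace ℝ (Fin 2)))))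
    (hrad1 : dist O A ^ 2 - rA ^ 2 = dist O B ^ 2 - rB ^ 2)
    (hrad2 : dist O B ^ 2 - rB ^ 2 = dist O C ^ 2 - rC ^ 2)
    (hH : H ∈ openSegment ℝ B C)
    (hfoot : inner (𝕜 := ℝ) (O - H) (C - B) = 0) :
    dist O H < Real.sqrt 3 * dist B C := by
  -- extract barycentric weights
  have hO' : O ∈ convexHull ℝ ({A, B, C} : Set (EuclideanSpace ℝ (Fin 2))) :=
    interior_subset hO
  rw [show ({A, B, C} : Set (EuclideanSpace ℝ (Fin 2))) = insert A {B, C} from rfl,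
    convexHull_insert ⟨B, by simp⟩, convexHull_pair] at hO'
  rw [mem_convexJoin] at hO'
  obtain ⟨a, ha, y, hy, hOy⟩ := hO'
  obtain ⟨p, q, hp, hq, hpq, rfl⟩ := hy
  obtain ⟨l, t, hl, ht, hlt, hOc⟩ := hOy
  rw [Set.mem_singleton_iff] at ha
  rw [ha] at hOc
  set m := t * p with hm
  set n := t * q with hn
  have hm0 : 0 ≤ m := mul_nonneg ht hp
  have hn0 : 0 ≤ n := mul_nonneg ht hq
  have hsum : l + m + n = 1 := by
    have : l + t * (p + q) = 1 := by rw [hpq, mul_one]; exact hlt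
    rw [hm, hn]; nlinarith
  have hcomb : l • A + m • B + n • C = O := by
    rw [← hOc, hm, hn, smul_add, smul_smul, smul_smul]; abel
  clear hOc ha hlt hpq hp hq ht hO
  -- vectors from O
  set u : EuclideanSpace ℝ (Fin 2) := A - O with hu
  set v : EuclideanSpace ℝ (Fin 2) := B - O with hv
  set w : EuclideanSpace ℝ (Fin 2) := C - O with hw
  have hE : l • u + m • v + n • w = (0 : EuclideanSpace ℝ (Fin 2)) := by
    rw [hu, hv, hw, smul_sub, smul_sub, smul_sub]
    have : l • A - l • O + (m • B - m • O) + (n • C - n • O)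
        = (l • A + m • B + n • C) - ((l + m + n) • O) := by
      rw [add_smul, add_smul]; abel
    rw [this, hcomb, hsum, one_smul, sub_self]
  have h0 : ⟪l • u + m • v + n • w, l • u + m • v + n • w⟫ = 0 := by
    rw [hE]; simp
  simp only [inner_add_left, inner_add_right, real_inner_smul_left,
    real_inner_smul_right] at h0
  have hvu : ⟪v, u⟫ = ⟪u, v⟫ := real_inner_comm _ _
  have hwu : ⟪w, u⟫ = ⟪u, w⟫ := real_inner_comm _ _
  have hwv : ⟪w, v⟫ = ⟪v, w⟫ := real_inner_comm _ _
  rw [hvu, hwu, hwv] at h0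
  -- powers
  set k : ℝ := dist O B ^ 2 - rB ^ 2 with hk
  have huu : ⟪u, u⟫ = k + rA ^ 2 := by
    rw [hu, real_inner_self_eq_norm_sq, ← dist_eq_norm, dist_comm]; linarith
  have hvv : ⟪v, v⟫ = k + rB ^ 2 := by
    rw [hv, real_inner_self_eq_norm_sq, ← dist_eq_norm, dist_comm]; linarith
  have hww : ⟪w, w⟫ = k + rC ^ 2 := by
    rw [hw, real_inner_self_eq_norm_sq, ← dist_eq_norm, dist_comm]; linarith
  have hAB' : ⟪u - v, u - v⟫ = rA ^ 2 + rB ^ 2 + 2 * rA * rB * Real.cos ΦAB := by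
    rw [hu, hv, show A - O - (B - O) = A - B by abel, real_inner_self_eq_norm_sq,
      ← dist_eq_norm]; exact hAB
  have hBC' : ⟪v - w, v - w⟫ = rB ^ 2 + rC ^ 2 + 2 * rB * rC * Real.cos ΦBC := by
    rw [hv, hw, show B - O - (C - O) = B - C by abel, real_inner_self_eq_norm_sq,
      ← dist_eq_norm]; exact hBC
  have hCA' : ⟪w - u, w - u⟫ = rC ^ 2 + rA ^ 2 + 2 * rC * rA * Real.cos ΦCA := by
    rw [hw, hu, show C - O - (A - O) = C - A by abel, real_inner_self_eq_norm_sq,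
      ← dist_eq_norm]; exact hCA
  rw [real_inner_sub_sub_self] at hAB' hBC' hCA'
  have hiuv : ⟪u, v⟫ = k - rA * rB * Real.cos ΦAB := by linarith
  have hivw : ⟪v, w⟫ = k - rB * rC * Real.cos ΦBC := by linarith
  have hiuw : ⟪u, w⟫ = k - rC * rA * Real.cos ΦCA := by linarith
  rw [huu, hvv, hww, hiuv, hivw, hiuw] at h0
  -- the radical-center power is at most rB * rC
  have hS2 : (l + m + n) ^ 2 = 1 := by rw [hsum]; ring
  have hkval : k = -(l ^ 2 * rA ^ 2) - m ^ 2 * rB ^ 2 - n ^ 2 * rC ^ 2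
      + 2 * l * m * rA * rB * Real.cos ΦAB + 2 * m * n * rB * rC * Real.cos ΦBC
      + 2 * l * n * rC * rA * Real.cos ΦCA := by
    linear_combination h0 - k * hS2
  have hS2bc : rB * rC * (l + m + n) ^ 2 = rB * rC := by rw [hsum]; ring
  have hc1 : Real.cos ΦAB ≤ 1 := Real.cos_le_one _
  have hc2 : Real.cos ΦBC ≤ 1 := Real.cos_le_one _
  have hc3 : Real.cos ΦCA ≤ 1 := Real.cos_le_one _
  have hexp : rB * rC - k = (l * rA - m * rB - n * rC) ^ 2
      + 2 * ((1 - Real.cos ΦAB) * (l * m * (rA * rB)))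
      + 2 * ((1 - Real.cos ΦCA) * (l * n * (rC * rA)))
      + 2 * ((1 - Real.cos ΦBC) * (m * n * (rB * rC)))
      + rB * rC * (l ^ 2 + 2 * (l * m) + 2 * (l * n) + (m - n) ^ 2) := by
    linear_combination - hkval - hS2bc
  have hk_le : k ≤ rB * rC := by
    have h1 : 0 ≤ (l * rA - m * rB - n * rC) ^ 2 := sq_nonneg _
    have h2 : 0 ≤ (1 - Real.cos ΦAB) * (l * m * (rA * rB)) :=
      mul_nonneg (sub_nonneg.mpr hc1)
        (mul_nonneg (mul_nonneg hl hm0) (mul_nonneg hrA.le hrB.le))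
    have h3 : 0 ≤ (1 - Real.cos ΦCA) * (l * n * (rC * rA)) :=
      mul_nonneg (sub_nonneg.mpr hc3)
        (mul_nonneg (mul_nonneg hl hn0) (mul_nonneg hrC.le hrA.le))
    have h4 : 0 ≤ (1 - Real.cos ΦBC) * (m * n * (rB * rC)) :=
      mul_nonneg (sub_nonneg.mpr hc2)
        (mul_nonneg (mul_nonneg hm0 hn0) (mul_nonneg hrB.le hrC.le))
    have h5 : 0 ≤ rB * rC * (l ^ 2 + 2 * (l * m) + 2 * (l * n) + (m - n) ^ 2) :=
      mul_nonneg (mul_nonneg hrB.le hrC.le)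
        (by
          linarith only [mul_nonneg hl hm0, mul_nonneg hl hn0,
            sq_nonneg (m - n), sq_nonneg l])
    linarith only [hexp, h1, h2, h3, h4, h5]
  -- Pythagoras: the foot is closer than B
  obtain ⟨β, γ, hβ, hγ, hβγ, hHc⟩ := hH
  have hHB : H - B = γ • (C - B) := by
    rw [← hHc]
    have hβ1 : β = 1 - γ := by linarith
    rw [hβ1]
    module
  have hperp : ⟪O - H, H - B⟫ = 0 := by
    rw [hHB, real_inner_smul_right, hfoot, mul_zero]
  have hOB2 : dist O H ^ 2 ≤ dist O B ^ 2 := by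
    have hsplit : O - B = (O - H) + (H - B) := by abel
    rw [dist_eq_norm, dist_eq_norm, hsplit, norm_add_sq_real, hperp]
    linarith only [sq_nonneg ‖H - B‖]
  -- conclude
  have hBC_ne : B ≠ C := by
    have := hABC.injective.ne (show (1 : Fin 3) ≠ 2 by decide)
    simpa using this
  have hd : 0 < dist B C := dist_pos.mpr hBC_ne
  have hcβ : 0 ≤ Real.cos ΦBC :=
    Real.cos_nonneg_of_mem_Icc ⟨by linarith only [pi_pos, hΦBC.1], hΦBC.2⟩
  have hOBk : dist O B ^ 2 = k + rB ^ 2 := by rw [hk]; ring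
  have hfin : dist O H ^ 2 < 3 * dist B C ^ 2 := by
    linarith only [hOB2, hk_le, hBC, hOBk, sq_nonneg (rB - rC),
      mul_nonneg (mul_nonneg hrB.le hrC.le) hcβ, mul_pos hrB hrB, mul_pos hrC hrC]
  have heq : Real.sqrt 3 * dist B C = Real.sqrt (3 * dist B C ^ 2) := by
    rw [Real.sqrt_mul (by norm_num : (0:ℝ) ≤ 3), Real.sqrt_sq dist_nonneg]
  rw [heq]
  exact (Real.lt_sqrt dist_nonneg).mpr hfin
end

section
/- Let A, O, B be three non-collinear points in the Euclidean plane such that the angle ∠AOB at the vertex O satisfies ∠AOB ≥ 2π/3. Then |AB| − |AO| ≥ (1/2)·|OB|. -/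
open Real EuclideanGeometry

/-- If `A`, `O`, `B` are non-collinear points in the Euclidean plane with
`∠AOB ≥ 2π/3`, then `|AB| − |AO| ≥ (1/2)|OB|`. -/
theorem dist_sub_ge_of_angle_ge
    (A O B : EuclideanSpace ℝ (Fin 2))
    (hcol : ¬ Collinear ℝ ({A, O, B} : Set (EuclideanSpace ℝ (Fin 2))))
    (hangle : 2 * π / 3 ≤ ∠ A O B) :
    (1 / 2) * dist O B ≤ dist A B - dist A O := by
  have hlaw := EuclideanGeometry.law_cos A O B
  have hpi : ∠ A O B ≤ π := EuclideanGeometry.angle_le_pi A O B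
  have hθ0 : (0:ℝ) ≤ 2 * π / 3 := by positivity
  have hcos : Real.cos (∠ A O B) ≤ Real.cos (2 * π / 3) := by
    apply Real.cos_le_cos_of_nonneg_of_le_pi hθ0 hpi hangle
  have hval : Real.cos (2 * π / 3) = -(1/2) := by
    have : (2:ℝ) * π / 3 = π - π / 3 := by ring
    rw [this, Real.cos_pi_sub, Real.cos_pi_div_three]
  rw [hval] at hcos
  have d1 : 0 ≤ dist A O := dist_nonneg
  have d2 : 0 ≤ dist B O := dist_nonneg
  have d3 : 0 ≤ dist A B := dist_nonneg
  have hob : dist O B = dist B O := dist_comm O B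
  nlinarith [sq_nonneg (dist A B - dist A O - dist B O / 2), mul_nonneg d1 d2]
end

section
/- Given positive radii r_i, r_j, r_k and weights Φ_ij, Φ_jk, Φ_ik ∈ [0, π/2], the following explicit formula holds: r_j · ∂θ_i^{jk}/∂r_j = (r_j / l_ij) · (cos α − cos θ_j^{ik} · cos β) / sin θ_j^{ik}, where α = arccos((r_j² + l_jk² − r_k²)/(2 r_j l_jk)), β = arccos((r_j² + l_ij² − r_i²)/(2 r_j l_ij)), and θ_j^{ik} = arccos((l_ij² + l_jk² − l_ik²)/(2 l_ij l_jk)) is the inner angle at vertex j. -/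
open Real

/-- The edge length assigned to edge `{i,j}` by the circle packing metric with
radii `a`, `b` and weight `φ`. -/
noncomputable def ell (a b φ : ℝ) : ℝ := Real.sqrt (a ^ 2 + b ^ 2 + 2 * a * b * Real.cos φ)

/-- The inner angle of a Euclidean triangle at the vertex whose two adjacent sides
have lengths `x`, `y` and whose opposite side has length `z`. -/
noncomputable def innerAngle (x y z : ℝ) : ℝ :=
  Real.arccos ((x ^ 2 + y ^ 2 - z ^ 2) / (2 * x * y))

/-!
The angle `θ_i^{jk}` depends on `r_j` only through the two edge lengths `l_ij` and `l_jk`.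
Differentiating the cosine law, and using that both `sin θ_i` and `sin θ_j` are `√Q` over twice
the product of their adjacent sides (`Q` the Heron quartic), gives
`∂θ_i/∂l_jk = 1 / (l_ij sin θ_j)` and `∂θ_i/∂l_ij = - cos θ_j / (l_ij sin θ_j)`.
On the other hand `∂l_jk/∂r_j = (r_j + r_k cos Φ_jk) / l_jk = cos α` and likewise
`∂l_ij/∂r_j = cos β`, so the formula is the chain rule.
-/

/-- Sixteen times the squared area of a triangle with side lengths `x`, `y`, `z` (Heron). -/
def heron (x y z : ℝ) : ℝ :=
  2 * x ^ 2 * y ^ 2 + 2 * y ^ 2 * z ^ 2 + 2 * z ^ 2 * x ^ 2 - x ^ 4 - y ^ 4 - z ^ 4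

theorem heron_comm (x y z : ℝ) : heron x y z = heron x z y := by
  unfold heron; ring

theorem heron_pos {x y z : ℝ} (hx : x < y + z) (hy : y < x + z) (hz : z < x + y) :
    0 < heron x y z := by
  have hfactor : heron x y z = (x + y + z) * (y + z - x) * (x + z - y) * (x + y - z) := by
    unfold heron; ring
  rw [hfactor]
  have : 0 < x + y + z := by linarith
  have : 0 < y + z - x := by linarith
  have : 0 < x + z - y := by linarith
  have : 0 < x + y - z := by linarith
  positivity

theorem one_sub_sq_cosineLaw {x y : ℝ} (hx : x ≠ 0) (hy : y ≠ 0) (z : ℝ) :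
    1 - ((x ^ 2 + y ^ 2 - z ^ 2) / (2 * x * y)) ^ 2 = heron x y z / (2 * x * y) ^ 2 := by
  unfold heron; field_simp; ring

theorem sin_innerAngle {x y : ℝ} (hx : 0 < x) (hy : 0 < y) (z : ℝ) :
    sin (innerAngle x y z) = √(heron x y z) / (2 * x * y) := by
  rw [innerAngle, sin_arccos, one_sub_sq_cosineLaw hx.ne' hy.ne', sqrt_div' _ (sq_nonneg _),
    sqrt_sq (by positivity)]

theorem sq_cosineLaw_lt_one {x y z : ℝ} (hx : x < y + z) (hy : y < x + z) (hz : z < x + y) :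
    ((x ^ 2 + y ^ 2 - z ^ 2) / (2 * x * y)) ^ 2 < 1 := by
  have hx₀ : 0 < x := by linarith
  have hy₀ : 0 < y := by linarith
  have h := one_sub_sq_cosineLaw hx₀.ne' hy₀.ne' z
  have : 0 < heron x y z / (2 * x * y) ^ 2 := div_pos (heron_pos hx hy hz) (by positivity)
  linarith

theorem cos_innerAngle {x y z : ℝ} (hx : x < y + z) (hy : y < x + z) (hz : z < x + y) :
    cos (innerAngle x y z) = (x ^ 2 + y ^ 2 - z ^ 2) / (2 * x * y) := by
  have h := (sq_le_one_iff_abs_le_one _).mp (sq_cosineLaw_lt_one hx hy hz).le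
  exact cos_arccos (abs_le.mp h).1 (abs_le.mp h).2

theorem hasDerivAt_innerAngle {f g : ℝ → ℝ} {f' g' c x : ℝ}
    (hf : HasDerivAt f f' x) (hg : HasDerivAt g g' x)
    (hfc : f x < c + g x) (hcg : c < f x + g x) (hgf : g x < f x + c) :
    HasDerivAt (fun t => innerAngle (f t) c (g t))
      ((g' - cos (innerAngle (f x) (g x) c) * f') / (f x * sin (innerAngle (f x) (g x) c))) x := by
  have ha : 0 < f x := by linarith
  have hb : 0 < g x := by linarith
  have hc : 0 < c := by linarith
  have hQ : 0 < √(heron (f x) c (g x)) := sqrt_pos.mpr (heron_pos hfc hcg hgf)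
  have hT := sq_cosineLaw_lt_one hfc hcg hgf
  have hT₁ : (f x ^ 2 + c ^ 2 - g x ^ 2) / (2 * f x * c) ≠ -1 := fun h => by norm_num [h] at hT
  have hT₂ : (f x ^ 2 + c ^ 2 - g x ^ 2) / (2 * f x * c) ≠ 1 := fun h => by norm_num [h] at hT
  have hcosineLaw := (((hf.pow 2).add_const (c ^ 2)).sub (hg.pow 2)).div
    ((hf.const_mul 2).mul_const c) (by positivity)
  refine ((hasDerivAt_arccos hT₁ hT₂).comp x hcosineLaw).congr_deriv ?_
  rw [← sin_arccos, ← innerAngle, sin_innerAngle ha hc, cos_innerAngle (by linarith) hgf hcg,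
    sin_innerAngle ha hb, heron_comm]
  norm_num
  field_simp
  ring

theorem ell_comm (a b φ : ℝ) : ell a b φ = ell b a φ := by
  unfold ell; ring_nf

theorem sq_ell (a b φ : ℝ) : ell a b φ ^ 2 = a ^ 2 + b ^ 2 + 2 * a * b * cos φ := by
  refine sq_sqrt ?_
  have h₁ : 0 ≤ (1 + cos φ) * (a + b) ^ 2 :=
    mul_nonneg (by linarith [neg_one_le_cos φ]) (sq_nonneg _)
  have h₂ : 0 ≤ (1 - cos φ) * (a - b) ^ 2 :=
    mul_nonneg (by linarith [cos_le_one φ]) (sq_nonneg _)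
  nlinarith

theorem ell_le_add {a b : ℝ} (ha : 0 ≤ a) (hb : 0 ≤ b) (φ : ℝ) : ell a b φ ≤ a + b := by
  refine sqrt_le_iff.mpr ⟨by positivity, ?_⟩
  nlinarith [mul_nonneg (mul_nonneg ha hb) (sub_nonneg.mpr (cos_le_one φ))]

theorem lt_ell {a b φ : ℝ} (ha : 0 ≤ a) (hb : 0 < b) (hφ : 0 ≤ cos φ) :
    a < ell a b φ := by
  refine (lt_sqrt ha).mpr ?_
  nlinarith [mul_nonneg (mul_nonneg ha hb.le) hφ]

theorem ell_pos {a b φ : ℝ} (ha : 0 < a) (hb : 0 < b) (hφ : 0 ≤ cos φ) : 0 < ell a b φ :=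
  ha.trans (lt_ell ha.le hb hφ)

theorem ell_lt_ell_add_ell {a b c φ₁ φ₂ φ₃ : ℝ} (ha : 0 ≤ a) (hb : 0 ≤ b) (hc : 0 < c)
    (hφ₂ : 0 ≤ cos φ₂) (hφ₃ : 0 ≤ cos φ₃) :
    ell a b φ₁ < ell a c φ₂ + ell b c φ₃ := by
  linarith [ell_le_add ha hb φ₁, lt_ell ha hc hφ₂, lt_ell hb hc hφ₃]

theorem hasDerivAt_ell_right {a b φ : ℝ} (h : ell a b φ ≠ 0) :
    HasDerivAt (fun x => ell a x φ) ((b + a * cos φ) / ell a b φ) b := by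
  have hpoly :
      HasDerivAt (fun x => a ^ 2 + x ^ 2 + 2 * a * x * cos φ) (2 * b + 2 * a * cos φ) b := by
    refine (((hasDerivAt_pow 2 b).const_add (a ^ 2)).add
      (((hasDerivAt_id b).const_mul (2 * a)).mul_const (cos φ))).congr_deriv ?_
    norm_num
  have hsqrt := hpoly.sqrt (fun h0 => h (by rw [ell, h0, sqrt_zero]))
  change HasDerivAt (fun x => ell a x φ) ((2 * b + 2 * a * cos φ) / (2 * ell a b φ)) b at hsqrt
  convert hsqrt using 1
  field_simp

theorem hasDerivAt_ell_left {a b φ : ℝ} (h : ell a b φ ≠ 0) :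
    HasDerivAt (fun x => ell x b φ) ((a + b * cos φ) / ell a b φ) a := by
  simp only [ell_comm _ b] at h ⊢
  exact hasDerivAt_ell_right h

/-- This is `∂ₐ ell a b φ` (`hasDerivAt_ell_left`): the way `cos α` and `cos β` enter. -/
theorem cos_arccos_cosineLaw_ell {a : ℝ} (ha : a ≠ 0) (b φ : ℝ) :
    cos (arccos ((a ^ 2 + ell a b φ ^ 2 - b ^ 2) / (2 * a * ell a b φ))) =
      (a + b * cos φ) / ell a b φ := by
  have hnum : a ^ 2 + ell a b φ ^ 2 - b ^ 2 = 2 * a * (a + b * cos φ) := by rw [sq_ell]; ring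
  rw [hnum, mul_div_mul_left _ _ (mul_ne_zero two_ne_zero ha)]
  have hsq : (a + b * cos φ) ^ 2 ≤ ell a b φ ^ 2 := by
    rw [sq_ell]; nlinarith [mul_nonneg (sq_nonneg b) (sub_nonneg.mpr (cos_sq_le_one φ))]
  have habs : |(a + b * cos φ) / ell a b φ| ≤ 1 := by
    have hell : 0 ≤ ell a b φ := sqrt_nonneg _
    rw [abs_div, abs_of_nonneg hell]
    exact div_le_one_of_le₀ (abs_le_of_sq_le_sq hsq hell) hell
  exact cos_arccos (abs_le.mp habs).1 (abs_le.mp habs).2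

/-- The explicit formula
`r_j ∂θ_i^{jk}/∂r_j = (r_j / l_ij) (cos α − cos θ_j^{ik} cos β) / sin θ_j^{ik}`. -/
theorem angle_deriv_formula
    (ri rj rk Φij Φjk Φik : ℝ)
    (hri : 0 < ri) (hrj : 0 < rj) (hrk : 0 < rk)
    (hΦij : Φij ∈ Set.Icc 0 (π / 2)) (hΦjk : Φjk ∈ Set.Icc 0 (π / 2))
    (hΦik : Φik ∈ Set.Icc 0 (π / 2)) :
    rj * deriv (fun x => innerAngle (ell ri x Φij) (ell ri rk Φik) (ell x rk Φjk)) rj =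
      (rj / ell ri rj Φij) *
        ((Real.cos (Real.arccos ((rj ^ 2 + (ell rj rk Φjk) ^ 2 - rk ^ 2) /
              (2 * rj * ell rj rk Φjk))) -
          Real.cos (innerAngle (ell ri rj Φij) (ell rj rk Φjk) (ell ri rk Φik)) *
          Real.cos (Real.arccos ((rj ^ 2 + (ell ri rj Φij) ^ 2 - ri ^ 2) /
              (2 * rj * ell ri rj Φij)))) /
        Real.sin (innerAngle (ell ri rj Φij) (ell rj rk Φjk) (ell ri rk Φik))) := by
  have hcos : ∀ {φ : ℝ}, φ ∈ Set.Icc 0 (π / 2) → 0 ≤ cos φ := fun hφ =>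
    cos_nonneg_of_mem_Icc ⟨by linarith [pi_pos, hφ.1], hφ.2⟩
  have hij := hcos hΦij
  have hjk := hcos hΦjk
  have hik := hcos hΦik
  have hij_lt : ell ri rj Φij < ell ri rk Φik + ell rj rk Φjk :=
    ell_lt_ell_add_ell hri.le hrj.le hrk hik hjk
  have hik_lt : ell ri rk Φik < ell ri rj Φij + ell rj rk Φjk := by
    rw [ell_comm rj]; exact ell_lt_ell_add_ell hri.le hrk.le hrj hij hjk
  have hjk_lt : ell rj rk Φjk < ell ri rj Φij + ell ri rk Φik := by
    rw [ell_comm ri, ell_comm ri]; exact ell_lt_ell_add_ell hrj.le hrk.le hri hij hik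
  have hderiv := hasDerivAt_innerAngle
    (hasDerivAt_ell_right (ell_pos hri hrj hij).ne')
    (hasDerivAt_ell_left (ell_pos hrj hrk hjk).ne')
    hij_lt hik_lt hjk_lt
  rw [hderiv.deriv, cos_arccos_cosineLaw_ell hrj.ne', ell_comm ri rj,
    cos_arccos_cosineLaw_ell hrj.ne']
  ring
end

section
/- Let f : ℝᴺ → ℝ be twice continuously differentiable such that for every u ∈ ℝᴺ the Hessian of f at u is symmetric positive semidefinite with kernel exactly the span of 𝟙 = (1, …, 1)ᵀ. Fix a ∈ ℝ and set 𝒰_a = {u ∈ ℝᴺ : Σᵢ uᵢ = a}, and suppose there exists u₀ ∈ 𝒰_a with ∇f(u₀) = 0. Then f(u) → +∞ as ‖u‖ → ∞ with u ∈ 𝒰_a; in particular the restriction f|_{𝒰_a} is proper (preimages of compact sets intersected with 𝒰_a are compact), u₀ is the unique critical point of f|_{𝒰_a}, and f attains its minimum over 𝒰_a exactly at u₀. -/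
/-! The Hessian is positive semidefinite everywhere, so `f` is convex; since its kernel consists
of the constant vectors, it is positive definite on the directions `∑ i, v i = 0` tangent to `𝒰_a`.
Along every line in `𝒰_a` the directional derivative of `f` is therefore strictly increasing, so a
point of `𝒰_a` at which `f` is critical along `𝒰_a` is a strict minimiser of `f` on `𝒰_a`: this is
both the strict minimum at `u₀` and the uniqueness of the critical point. A convex function with a
strict minimum at `u₀` grows at least linearly, `f u ≥ f u₀ + c * dist u u₀` away from `u₀`, which
gives the limit at infinity and hence properness. -/

open Filter Set

namespace LinearMap.BilinForm

variable {M : Type*} [AddCommGroup M] [Module ℝ M] {B : LinearMap.BilinForm ℝ M}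

/-- Cauchy–Schwarz in its weakest form: the quadratic `t ↦ B (v + t w) (v + t w)` has no
constant term, so its discriminant `(2 B v w)²` must vanish. -/
theorem IsPosSemidef.apply_eq_zero_of_apply_self_eq_zero (hB : B.IsPosSemidef) {v : M}
    (hv : B v v = 0) (w : M) : B v w = 0 := by
  have hquad : ∀ t : ℝ, 0 ≤ B w w * (t * t) + 2 * B v w * t + 0 := fun t => by
    have := hB.isNonneg.nonneg (v + t • w)
    simp only [map_add, map_smul, LinearMap.add_apply, LinearMap.smul_apply, smul_eq_mul, hv,
      hB.isSymm.eq w v] at this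
    linarith
  have := discrim_le_zero hquad
  rw [discrim] at this
  nlinarith [sq_nonneg (B v w)]

theorem IsPosSemidef.apply_self_pos_of_apply_ne_zero (hB : B.IsPosSemidef) {v : M}
    (hv : B v ≠ 0) : 0 < B v v :=
  (hB.isNonneg.nonneg v).lt_of_ne fun h =>
    hv (LinearMap.ext (hB.apply_eq_zero_of_apply_self_eq_zero h.symm))

end LinearMap.BilinForm

theorem const_eq_zero_of_sum_eq_zero {ι : Type*} [Fintype ι] {c : ℝ}
    (h : ∑ _i : ι, c = 0) : (fun _ : ι => c) = 0 := by
  funext i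
  have : Nonempty ι := ⟨i⟩
  simpa [Finset.card_univ, Fintype.card_ne_zero] using h

section Lines

variable {E F : Type*} [NormedAddCommGroup E] [NormedSpace ℝ E]
  [NormedAddCommGroup F] [NormedSpace ℝ F]

theorem hasDerivAt_comp_add_smul {g : E → F} {x v : E} {t : ℝ}
    (hg : DifferentiableAt ℝ g (x + t • v)) :
    HasDerivAt (fun s : ℝ => g (x + s • v)) (fderiv ℝ g (x + t • v) v) t := by
  have hline : HasDerivAt (fun s : ℝ => x + s • v) v t := by
    simpa using ((hasDerivAt_id t).smul_const v).const_add x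
  exact hg.hasFDerivAt.comp_hasDerivAt t hline

variable {f : E → ℝ} {x v : E}

theorem hasDerivAt_fderiv_apply_comp_add_smul (hf : ContDiff ℝ 2 f) (t : ℝ) :
    HasDerivAt (fun s : ℝ => fderiv ℝ f (x + s • v) v)
      (fderiv ℝ (fderiv ℝ f) (x + t • v) v v) t := by
  have hf' : Differentiable ℝ (fderiv ℝ f) :=
    (hf.fderiv_right (m := 1) (by norm_num)).differentiable one_ne_zero
  exact (hasDerivAt_comp_add_smul (hf' _)).clm_apply (hasDerivAt_const t v) |>.congr_deriv
    (by simp)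

theorem strictMono_fderiv_apply_comp_add_smul (hf : ContDiff ℝ 2 f)
    (hpos : ∀ t : ℝ, 0 < fderiv ℝ (fderiv ℝ f) (x + t • v) v v) :
    StrictMono fun t : ℝ => fderiv ℝ f (x + t • v) v :=
  strictMono_of_hasDerivAt_pos (hasDerivAt_fderiv_apply_comp_add_smul hf) hpos

theorem lt_add_of_fderiv_apply_eq_zero (hf : ContDiff ℝ 2 f)
    (hpos : ∀ t : ℝ, 0 < fderiv ℝ (fderiv ℝ f) (x + t • v) v v) (hx : fderiv ℝ f x v = 0) :
    f x < f (x + v) := by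
  have hdiff : Differentiable ℝ f := hf.differentiable (by norm_num)
  obtain ⟨c, hc, hslope⟩ := exists_hasDerivAt_eq_slope (fun s : ℝ => f (x + s • v)) _
    zero_lt_one (hdiff.continuous.comp (by fun_prop)).continuousOn
    fun t _ => hasDerivAt_comp_add_smul (hdiff _)
  have hmono := strictMono_fderiv_apply_comp_add_smul hf hpos hc.1
  simp only [zero_smul, add_zero, one_smul, sub_zero, div_one, hx] at hmono hslope
  linarith

theorem convexOn_univ_of_fderiv_fderiv_nonneg (hf : ContDiff ℝ 2 f)
    (hpsd : ∀ u v, 0 ≤ fderiv ℝ (fderiv ℝ f) u v v) : ConvexOn ℝ univ f := by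
  have hdiff : Differentiable ℝ f := hf.differentiable (by norm_num)
  refine ⟨convex_univ, fun x _ y _ a b ha hb hab => ?_⟩
  set g : ℝ → ℝ := fun s => f (x + s • (y - x))
  have hg' : ∀ t, HasDerivAt g (fderiv ℝ f (x + t • (y - x)) (y - x)) t :=
    fun t => hasDerivAt_comp_add_smul (hdiff _)
  have hg : ConvexOn ℝ univ g := by
    refine Monotone.convexOn_univ_of_deriv (fun t => (hg' t).differentiableAt) ?_
    rw [show deriv g = _ from funext fun t => (hg' t).deriv]
    exact monotone_of_hasDerivAt_nonneg (hasDerivAt_fderiv_apply_comp_add_smul hf)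
      fun t => hpsd _ _
  have := hg.2 (mem_univ 0) (mem_univ 1) ha hb hab
  have hxy : x + b • (y - x) = a • x + b • y := by
    rw [eq_sub_of_add_eq hab]; module
  simpa [g, hxy] using this

end Lines

section Coercive

variable {E : Type*} [NormedAddCommGroup E] [NormedSpace ℝ E] [ProperSpace E]
  {f : E → ℝ} {S : Set E} {u₀ : E}

/-- Convexity on the segment from `u₀` to `u` compares `u` with its radial projection to the unit
sphere around `u₀`, where `f - f u₀` has a positive minimum by compactness. -/
theorem ConvexOn.exists_linear_lower_bound_of_strict_min (hconv : ConvexOn ℝ S f) (hS : IsClosed S)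
    (hcont : ContinuousOn f S) (hu₀ : u₀ ∈ S) (hmin : ∀ u ∈ S, u ≠ u₀ → f u₀ < f u) :
    ∃ c > 0, ∀ u ∈ S, 1 ≤ dist u u₀ → f u₀ + c * dist u u₀ ≤ f u := by
  obtain ⟨m, hm, hsphere⟩ := (isCompact_sphere u₀ 1).inter_right hS |>.exists_forall_le'
    (hcont.mono inter_subset_right)
    fun u hu => hmin u hu.2 (Metric.ne_of_mem_sphere hu.1 one_ne_zero)
  refine ⟨m - f u₀, sub_pos.2 hm, fun u hu hr => ?_⟩
  set r := dist u u₀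
  have hr₀ : 0 < r := zero_lt_one.trans_le hr
  have hw : AffineMap.lineMap u₀ u r⁻¹ ∈ Metric.sphere u₀ 1 ∩ S := by
    refine ⟨?_, hconv.1.lineMap_mem hu₀ hu ⟨by positivity, inv_le_one_of_one_le₀ hr⟩⟩
    rw [Metric.mem_sphere, dist_lineMap_left, dist_comm, Real.norm_eq_abs,
      abs_of_pos (inv_pos.2 hr₀), inv_mul_cancel₀ hr₀.ne']
  have hseg := hconv.2 hu₀ hu (sub_nonneg.2 (inv_le_one_of_one_le₀ hr)) (inv_pos.2 hr₀).le
    (sub_add_cancel 1 r⁻¹)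
  rw [← AffineMap.lineMap_apply_module, smul_eq_mul, smul_eq_mul] at hseg
  have key : m ≤ (1 - r⁻¹) * f u₀ + r⁻¹ * f u := (hsphere _ hw).trans hseg
  have := mul_le_mul_of_nonneg_left key hr₀.le
  rw [mul_add, ← mul_assoc, ← mul_assoc, mul_sub, mul_inv_cancel₀ hr₀.ne'] at this
  linarith

theorem ConvexOn.tendsto_atTop_of_strict_min (hconv : ConvexOn ℝ S f) (hS : IsClosed S)
    (hcont : ContinuousOn f S) (hu₀ : u₀ ∈ S) (hmin : ∀ u ∈ S, u ≠ u₀ → f u₀ < f u) :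
    Tendsto f (cocompact E ⊓ 𝓟 S) atTop := by
  obtain ⟨c, hc, hgrowth⟩ := hconv.exists_linear_lower_bound_of_strict_min hS hcont hu₀ hmin
  have hdist : Tendsto (dist · u₀) (cocompact E ⊓ 𝓟 S) atTop :=
    (tendsto_dist_right_cocompact_atTop u₀).mono_left inf_le_left
  refine tendsto_atTop_mono' _ ?_ (tendsto_atTop_add_const_left _ (f u₀)
    (hdist.const_mul_atTop hc))
  filter_upwards [hdist.eventually_ge_atTop 1, mem_inf_of_right (mem_principal_self S)]
    with u hr hu using hgrowth u hu hr

end Coercive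

theorem isCompact_preimage_inter_of_tendsto_cocompact_inf_principal {X : Type*}
    [TopologicalSpace X] {f : X → ℝ} {S : Set X} (hf : Continuous f) (hS : IsClosed S)
    (htend : Tendsto f (cocompact X ⊓ 𝓟 S) atTop) {K : Set ℝ} (hK : IsCompact K) :
    IsCompact (f ⁻¹' K ∩ S) := by
  obtain ⟨C, hC⟩ := hK.bddAbove
  obtain ⟨T, hT, hTcompl⟩ := mem_cocompact.1 (mem_inf_principal.1 (htend.eventually_gt_atTop C))
  refine hT.of_isClosed_subset ((hK.isClosed.preimage hf).inter hS) fun u ⟨huK, huS⟩ => ?_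
  by_contra huT
  exact (hC huK).not_gt (hTcompl huT huS)

/-- If `f : ℝᴺ → ℝ` is `C²`, its Hessian is everywhere symmetric positive semidefinite
with kernel exactly the span of `𝟙`, and `f` has a critical point `u₀` on the hyperplane
`𝒰_a = {u : Σᵢ uᵢ = a}`, then `f → +∞` at infinity along `𝒰_a`; in particular `f|_{𝒰_a}`
is proper, `u₀` is the unique critical point of `f|_{𝒰_a}`, and `f` attains its minimum
over `𝒰_a` exactly at `u₀`. -/
theorem ricci_potential_proper
    (N : ℕ) (f : (Fin N → ℝ) → ℝ) (hf : ContDiff ℝ 2 f)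
    (hsymm : ∀ u v w : Fin N → ℝ,
      fderiv ℝ (fderiv ℝ f) u v w = fderiv ℝ (fderiv ℝ f) u w v)
    (hpsd : ∀ u v : Fin N → ℝ, 0 ≤ fderiv ℝ (fderiv ℝ f) u v v)
    (hker : ∀ u v : Fin N → ℝ,
      (∀ w, fderiv ℝ (fderiv ℝ f) u v w = 0) ↔ ∃ c : ℝ, v = fun _ => c)
    (a : ℝ) (u₀ : Fin N → ℝ) (hu₀ : ∑ i, u₀ i = a)
    (hcrit : fderiv ℝ f u₀ = 0) :
    Filter.Tendsto f
      (Filter.cocompact (Fin N → ℝ) ⊓ Filter.principal {u : Fin N → ℝ | ∑ i, u i = a})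
      Filter.atTop ∧
    (∀ Kc : Set ℝ, IsCompact Kc →
      IsCompact (f ⁻¹' Kc ∩ {u : Fin N → ℝ | ∑ i, u i = a})) ∧
    (∀ u : Fin N → ℝ, ∑ i, u i = a →
      (∀ v : Fin N → ℝ, ∑ i, v i = 0 → fderiv ℝ f u v = 0) → u = u₀) ∧
    (∀ u : Fin N → ℝ, ∑ i, u i = a → u ≠ u₀ → f u₀ < f u) := by
  set S := {u : Fin N → ℝ | ∑ i, u i = a}
  have hS : S = (∑ i, LinearMap.proj i : (Fin N → ℝ) →ₗ[ℝ] ℝ) ⁻¹' {a} := by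
    ext u; simp [S]
  have hS_closed : IsClosed S :=
    hS ▸ isClosed_singleton.preimage (LinearMap.continuous_of_finiteDimensional _)
  have hS_convex : Convex ℝ S := hS ▸ (convex_singleton a).linear_preimage _
  have hpos : ∀ u v : Fin N → ℝ, ∑ i, v i = 0 → v ≠ 0 →
      0 < fderiv ℝ (fderiv ℝ f) u v v := by
    intro u v hv hv0
    refine LinearMap.BilinForm.IsPosSemidef.apply_self_pos_of_apply_ne_zero
      (B := (fderiv ℝ (fderiv ℝ f) u).toLinearMap₁₂) ⟨⟨hsymm u⟩, ⟨hpsd u⟩⟩ fun h => hv0 ?_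
    obtain ⟨c, rfl⟩ := (hker u v).1 fun w => LinearMap.congr_fun h w
    exact const_eq_zero_of_sum_eq_zero hv
  have hlt : ∀ u ∈ S, ∀ w ∈ S, u ≠ w →
      (∀ v : Fin N → ℝ, ∑ i, v i = 0 → fderiv ℝ f u v = 0) → f u < f w := by
    intro u hu w hw hne hcu
    have hsum : ∑ i, (w - u) i = 0 := by
      simp [Finset.sum_sub_distrib, show ∑ i, u i = a from hu, show ∑ i, w i = a from hw]
    simpa using lt_add_of_fderiv_apply_eq_zero hf
      (fun t => hpos _ _ hsum (sub_ne_zero.2 hne.symm)) (hcu _ hsum)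
  have hmin : ∀ u ∈ S, u ≠ u₀ → f u₀ < f u :=
    fun u hu hne => hlt u₀ hu₀ u hu hne.symm fun v _ => by simp [hcrit]
  have htend : Tendsto f (cocompact _ ⊓ 𝓟 S) atTop :=
    ((convexOn_univ_of_fderiv_fderiv_nonneg hf hpsd).subset (subset_univ S) hS_convex
      ).tendsto_atTop_of_strict_min hS_closed hf.continuous.continuousOn hu₀ hmin
  exact ⟨htend, fun K hK =>
    isCompact_preimage_inter_of_tendsto_cocompact_inf_principal hf.continuous hS_closed htend hK,
    fun u hu hcu => by_contra fun hne => (hmin u hu hne).not_gt (hlt u hu u₀ hu₀ hne hcu), hmin⟩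
end
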